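/- arXiv:2202.13679 — 3 statements merged into one kernel-verified Lean document; each statement's English description precedes it below -/
import Mathlib

section
/- Let G be a metabelian 5-group of maximal class of order 5^n with n ≥ 4 and G/γ_2(G) of type (5,5), with defect k = k(G). Let x ∈ G ∖ χ_2(G) and y ∈ χ_2(G) ∖ γ_2(G), and let the six maximal normal subgroups of G be H_1 = ⟨y, γ_2(G)⟩ = χ_2(G) and H_i = ⟨x y^{i−2}, γ_2(G)⟩ for 2 ≤ i ≤ 6. Then |H_i / γ_2(H_i)| = 5^2 for 2 ≤ i ≤ 6, and |H_1 / γ_2(H_1)| = 5^{n−k−1}. -/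
open Subgroup
open scoped commutatorElement

/-- The two-step centralizer `χ₂(G) = {g ∈ G : [g,u] ∈ γ₄(G) for all u ∈ γ₂(G)}`,
where `γ_j(G) = lowerCentralSeries G (j-1)`. -/
def twoStepCentralizer (G : Type*) [Group G] : Subgroup G where
  carrier := {g : G | ∀ u ∈ (⊤ : Subgroup G).lowerCentralSeries 1, ⁅g, u⁆ ∈ (⊤ : Subgroup G).lowerCentralSeries 3}
  one_mem' := by
    intro u hu
    simpa using one_mem ((⊤ : Subgroup G).lowerCentralSeries 3)
  mul_mem' := by
    intro a b ha hb u hu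
    have h : ⁅a * b, u⁆ = (a * ⁅b, u⁆ * a⁻¹) * ⁅a, u⁆ := by
      simp only [commutatorElement_def]; group
    rw [h]
    exact mul_mem ((Subgroup.lowerCentralSeries_normal (⊤ : Subgroup G) 3).conj_mem _ (hb u hu) a) (ha u hu)
  inv_mem' := by
    intro a ha u hu
    have h : ⁅a⁻¹, u⁆ = a⁻¹ * ⁅a, u⁆⁻¹ * a := by
      simp only [commutatorElement_def]; group
    rw [h]
    simpa using (Subgroup.lowerCentralSeries_normal (⊤ : Subgroup G) 3).conj_mem _ (inv_mem (ha u hu)) a⁻¹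

/-! In a group of maximal class `|G : γ_{j+1}| = 5^{j+1}`, and `|H / γ₂(H)| = |G : γ₂(H)| / 5` for a
maximal subgroup `H`. Since `H = ⟨s⟩γ₂` with `⟨s⟩` abelian, `γ₂(H) = [H, γ₂]`. For `H = χ₂` this is
`γ_{n-k}` by the definition of the defect. For any other `H = ⟨s⟩γ₂` we have `G = ⟨s⟩χ₂`, hence
`γ₃ = [γ₂, G] ≤ [H, γ₂]·[χ₂, γ₂] ≤ [H, γ₂]·γ₄` because `n - k ≥ 4`; modulo the normal subgroup
`[H, γ₂]` the lower central series then stabilises at `γ₃`, so nilpotency gives `[H, γ₂] = γ₃`. -/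

open QuotientGroup

namespace Subgroup

variable {G : Type*} [Group G]

theorem commutator_le_iff_le_comap_centralizer {A B M : Subgroup G} [M.Normal] :
    ⁅A, B⁆ ≤ M ↔ A ≤ (centralizer (B.map (mk' M))).comap (mk' M) := by
  rw [← map_le_iff_le_comap, ← commutator_eq_bot_iff_le_centralizer, ← map_commutator,
    map_eq_bot_iff, ker_mk']

theorem commutator_sup_left_le {A B C M : Subgroup G} [M.Normal]
    (hA : ⁅A, C⁆ ≤ M) (hB : ⁅B, C⁆ ≤ M) : ⁅A ⊔ B, C⁆ ≤ M := by
  rw [commutator_le_iff_le_comap_centralizer] at hA hB ⊢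
  exact sup_le hA hB

theorem commutator_sup_right_le {A B C M : Subgroup G} [M.Normal]
    (hB : ⁅A, B⁆ ≤ M) (hC : ⁅A, C⁆ ≤ M) : ⁅A, B ⊔ C⁆ ≤ M := by
  rw [commutator_comm] at hB hC ⊢
  exact commutator_sup_left_le hB hC

theorem commutator_sup_self_eq_commutator_right {C A : Subgroup G} [IsMulCommutative C]
    [A.Normal] [(C ⊔ A).Normal] : ⁅C ⊔ A, C ⊔ A⁆ = ⁅C ⊔ A, A⁆ := by
  refine le_antisymm ?_ (commutator_mono le_rfl le_sup_right)
  have hCC : ⁅C, C⁆ = ⊥ := commutator_eq_bot_iff_le_centralizer.mpr (le_centralizer C)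
  refine commutator_sup_left_le (commutator_sup_right_le ?_ (commutator_mono le_sup_left le_rfl))
    (commutator_comm A _).le
  rw [hCC]
  exact bot_le

instance normal_sup_lowerCentralSeries_one (K : Subgroup G) :
    (K ⊔ lowerCentralSeries ⊤ 1).Normal :=
  Normal.of_commutator_le _ le_sup_right

theorem lowerCentralSeries_eq_of_succ_eq {i : ℕ}
    (h : lowerCentralSeries ⊤ (i + 1) = lowerCentralSeries (⊤ : Subgroup G) i) {j : ℕ}
    (hij : i ≤ j) : lowerCentralSeries ⊤ j = lowerCentralSeries (⊤ : Subgroup G) i := by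
  induction j, hij using Nat.le_induction with
  | base => rfl
  | succ j _ ih => rw [lowerCentralSeries_succ, ih, ← lowerCentralSeries_succ, h]

theorem lowerCentralSeries_succ_lt {c m i : ℕ} (hc : lowerCentralSeries (⊤ : Subgroup G) c = ⊥)
    (hm : lowerCentralSeries (⊤ : Subgroup G) m ≠ ⊥) (hi : i ≤ m) :
    lowerCentralSeries ⊤ (i + 1) < lowerCentralSeries (⊤ : Subgroup G) i := by
  refine lt_of_le_of_ne (lowerCentralSeries_antitone _ i.le_succ) fun h => hm ?_
  rw [eq_bot_iff, ← hc]
  calc lowerCentralSeries ⊤ m ≤ lowerCentralSeries ⊤ i := lowerCentralSeries_antitone _ hi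
    _ = lowerCentralSeries ⊤ (max i c) :=
      (lowerCentralSeries_eq_of_succ_eq h (le_max_left _ _)).symm
    _ ≤ lowerCentralSeries ⊤ c := lowerCentralSeries_antitone _ (le_max_right _ _)

theorem lowerCentralSeries_le_of_le_sup_succ {N : Subgroup G} [N.Normal] {c i : ℕ}
    (hc : lowerCentralSeries (⊤ : Subgroup G) c = ⊥)
    (h : lowerCentralSeries ⊤ i ≤ N ⊔ lowerCentralSeries ⊤ (i + 1)) :
    lowerCentralSeries ⊤ i ≤ N := by
  have hstep : ∀ j, i ≤ j → lowerCentralSeries ⊤ j ≤ N ⊔ lowerCentralSeries ⊤ (j + 1) := by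
    intro j hij
    induction j, hij using Nat.le_induction with
    | base => exact h
    | succ j _ ih =>
      exact (commutator_mono ih le_rfl).trans <|
        commutator_sup_left_le ((commutator_le_left N ⊤).trans le_sup_left) le_sup_right
  have hchain : ∀ j, i ≤ j → lowerCentralSeries ⊤ i ≤ N ⊔ lowerCentralSeries ⊤ j := by
    intro j hij
    induction j, hij using Nat.le_induction with
    | base => exact le_sup_right
    | succ j hij ih => exact ih.trans (sup_le le_sup_left (hstep j hij))
  calc lowerCentralSeries ⊤ i
      ≤ N ⊔ lowerCentralSeries ⊤ (max i c) := hchain _ (le_max_left _ _)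
    _ ≤ N ⊔ lowerCentralSeries ⊤ c :=
      sup_le_sup_left (lowerCentralSeries_antitone _ (le_max_right _ _)) N
    _ = N := by rw [hc, sup_bot_eq]

theorem _root_.IsPGroup.prime_mul_index_dvd_of_lt {p : ℕ} [Fact p.Prime] [Finite G]
    (hG : IsPGroup p G) {H K : Subgroup G} (h : H < K) : p * K.index ∣ H.index := by
  rw [← relIndex_mul_index h.le]
  refine mul_dvd_mul_right ?_ _
  obtain ⟨m, hm⟩ := (hG.to_subgroup K).index (H.subgroupOf K)
  have hm0 : m ≠ 0 := by
    rintro rfl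
    exact h.not_ge (relIndex_eq_one.mp hm)
  rw [relIndex, hm]
  exact dvd_pow_self p hm0

theorem index_lowerCentralSeries_of_maxClass {p n j : ℕ} [hp : Fact p.Prime] [Finite G]
    (hord : Nat.card G = p ^ n) (hγ₂ : (lowerCentralSeries (⊤ : Subgroup G) 1).index = p ^ 2)
    (hmax : lowerCentralSeries (⊤ : Subgroup G) (n - 1) = ⊥)
    (hmax' : lowerCentralSeries (⊤ : Subgroup G) (n - 2) ≠ ⊥) (hj : 1 ≤ j) (hjn : j ≤ n - 1) :
    (lowerCentralSeries (⊤ : Subgroup G) j).index = p ^ (j + 1) := by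
  have hchain : ∀ i k, i ≤ k → k ≤ n - 1 →
      p ^ (k - i) * (lowerCentralSeries (⊤ : Subgroup G) i).index ∣
        (lowerCentralSeries (⊤ : Subgroup G) k).index := by
    intro i k hik
    induction k, hik using Nat.le_induction with
    | base => simp
    | succ k hik ih =>
      intro hk
      calc p ^ (k + 1 - i) * (lowerCentralSeries ⊤ i).index
          = p * (p ^ (k - i) * (lowerCentralSeries ⊤ i).index) := by
            rw [show k + 1 - i = k - i + 1 by omega, pow_succ']; ring
        _ ∣ p * (lowerCentralSeries ⊤ k).index := mul_dvd_mul_left p (ih (by omega))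
        _ ∣ (lowerCentralSeries ⊤ (k + 1)).index :=
          (IsPGroup.of_card hord).prime_mul_index_dvd_of_lt
            (lowerCentralSeries_succ_lt hmax hmax' (by omega))
  refine Nat.dvd_antisymm ?_ ?_
  · have h := hchain j (n - 1) hjn le_rfl
    have hpn : p ^ n = p ^ (n - 1 - j) * p ^ (j + 1) := by rw [← pow_add]; congr 1; omega
    rw [hmax, index_bot, hord, hpn] at h
    exact Nat.dvd_of_mul_dvd_mul_left (pow_pos hp.out.pos _) h
  · have h := hchain 1 j hj hjn
    rwa [hγ₂, ← pow_add, show j - 1 + 2 = j + 1 by omega] at h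

theorem relIndex_zpowers_sup (N : Subgroup G) [N.Normal] (s : G) :
    N.relIndex (zpowers s ⊔ N) = orderOf (s : G ⧸ N) := by
  have h := relIndex_ker (K := zpowers s) (mk' N)
  rwa [ker_mk', MonoidHom.map_zpowers, Nat.card_zpowers, ← relIndex_sup_right] at h

theorem prime_mul_index_zpowers_sup {p : ℕ} [Fact p.Prime] {N : Subgroup G} [N.Normal]
    (hexp : ∀ g : G ⧸ N, g ^ p = 1) {s : G} (hs : s ∉ N) :
    p * (zpowers s ⊔ N).index = N.index := by
  rw [← relIndex_mul_index (le_sup_right : N ≤ zpowers s ⊔ N), relIndex_zpowers_sup N s,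
    orderOf_eq_prime (hexp s) ((QuotientGroup.eq_one_iff (N := N) s).not.mpr hs)]

theorem eq_top_of_lt_of_index_prime {H K : Subgroup G} (hH : H.index.Prime) (h : H < K) :
    K = ⊤ := by
  have hmul := relIndex_mul_index h.le
  rw [← hmul, Nat.prime_mul_iff] at hH
  rcases hH with ⟨-, hK⟩ | ⟨-, hHK⟩
  · exact index_eq_one.mp hK
  · exact absurd (relIndex_eq_one.mp hHK) h.not_ge

theorem card_abelianization_mul_index (H : Subgroup G) :
    Nat.card (Abelianization H) * H.index = ⁅H, H⁆.index := by
  have hcomm : ⁅H, H⁆.subgroupOf H = _root_.commutator H := by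
    rw [subgroupOf, ← map_subtype_commutator, comap_map_eq_self_of_injective H.subtype_injective]
  have hcard : Nat.card (Abelianization H) = ⁅H, H⁆.relIndex H := by
    rw [relIndex, hcomm, index_eq_card]
    rfl
  rw [hcard, relIndex_mul_index H.commutator_le_self]

theorem commutator_zpowers_sup_eq_lowerCentralSeries_two {C : Subgroup G} {s : G} {c : ℕ}
    (hc : lowerCentralSeries (⊤ : Subgroup G) c = ⊥) (hgen : zpowers s ⊔ C = ⊤)
    (hC : ⁅C, lowerCentralSeries (⊤ : Subgroup G) 1⁆ ≤ lowerCentralSeries ⊤ 3) :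
    ⁅zpowers s ⊔ lowerCentralSeries ⊤ 1, lowerCentralSeries (⊤ : Subgroup G) 1⁆ =
      lowerCentralSeries ⊤ 2 := by
  refine le_antisymm ?_ (lowerCentralSeries_le_of_le_sup_succ hc ?_)
  · rw [commutator_comm]
    exact commutator_mono le_rfl le_top
  · change ⁅lowerCentralSeries ⊤ 1, ⊤⁆ ≤ _
    refine (commutator_mono le_rfl hgen.ge).trans (commutator_sup_right_le ?_ ?_)
    · rw [commutator_comm]
      exact (commutator_mono le_sup_left le_rfl).trans le_sup_left
    · rw [commutator_comm]
      exact hC.trans le_sup_right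

end Subgroup

theorem abelianization_orders_of_maximal_subgroups_general {G : Type*} [Group G] [Finite G]
    (n : ℕ) (hn : 4 ≤ n)
    (hord : Nat.card G = 5 ^ n)
    (hmax : (⊤ : Subgroup G).lowerCentralSeries (n - 1) = ⊥)
    (hmax' : (⊤ : Subgroup G).lowerCentralSeries (n - 2) ≠ ⊥)
    (habel : Nonempty (Abelianization G ≃* Multiplicative (ZMod 5 × ZMod 5)))
    (k : ℕ)
    (hdef : ⁅(twoStepCentralizer G : Subgroup G), ((⊤ : Subgroup G).lowerCentralSeries 1 : Subgroup G)⁆ =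
      (⊤ : Subgroup G).lowerCentralSeries (n - k - 1)) (hk : k ≤ n - 4)
    (x y : G) (hx : x ∉ twoStepCentralizer G)
    (hy : y ∈ twoStepCentralizer G) (hy' : y ∉ (⊤ : Subgroup G).lowerCentralSeries 1)
    (hH1 : twoStepCentralizer G = Subgroup.closure {y} ⊔ (⊤ : Subgroup G).lowerCentralSeries 1) :
    (∀ i, 2 ≤ i → i ≤ 6 →
      Nat.card (Abelianization
        ↥(Subgroup.closure {x * y ^ (i - 2)} ⊔ (⊤ : Subgroup G).lowerCentralSeries 1)) = 5 ^ 2) ∧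
    Nat.card (Abelianization ↥(twoStepCentralizer G)) = 5 ^ (n - k - 1) := by
  rw [← zpowers_eq_closure] at hH1
  have : Fact (Nat.Prime 5) := ⟨Nat.prime_five⟩
  obtain ⟨e⟩ := habel
  have hexp : ∀ g : Abelianization G, g ^ 5 = 1 := fun g => e.injective <| by
    rw [map_pow, map_one, ← toAdd_eq_zero, toAdd_pow]
    exact ZModModule.char_nsmul_eq_zero 5 _
  have hγ₂ : ((⊤ : Subgroup G).lowerCentralSeries 1).index = 5 ^ 2 :=
    (index_eq_card _).trans <| (Nat.card_congr e.toEquiv).trans (by simp)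
  have hindex_max : ∀ s ∉ (⊤ : Subgroup G).lowerCentralSeries 1,
      (zpowers s ⊔ (⊤ : Subgroup G).lowerCentralSeries 1).index = 5 := fun s hs => by
    have := prime_mul_index_zpowers_sup (N := (⊤ : Subgroup G).lowerCentralSeries 1) hexp hs
    omega
  have hχ : (twoStepCentralizer G).index = 5 := hH1 ▸ hindex_max y hy'
  have hcard : ∀ H : Subgroup G, H.index = 5 → ∀ j, 1 ≤ j → j ≤ n - 1 →
      ⁅H, H⁆ = (⊤ : Subgroup G).lowerCentralSeries j → Nat.card (Abelianization H) = 5 ^ j := by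
    intro H hH j hj hjn hHH
    have := card_abelianization_mul_index H
    rw [hH, hHH, index_lowerCentralSeries_of_maxClass hord hγ₂ hmax hmax' hj hjn, pow_succ] at this
    exact Nat.eq_of_mul_eq_mul_right (by norm_num) this
  refine ⟨fun i _ _ => ?_, ?_⟩
  · rw [← zpowers_eq_closure]
    set s := x * y ^ (i - 2)
    have hs : s ∉ twoStepCentralizer G := fun h =>
      hx (by simpa [s] using mul_mem h (inv_mem (pow_mem hy (i - 2))))
    have hgen : zpowers s ⊔ twoStepCentralizer G = ⊤ :=
      eq_top_of_lt_of_index_prime (hχ ▸ Nat.prime_five) (right_lt_sup.mpr (zpowers_le.not.mpr hs))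
    refine hcard _ (hindex_max s fun h => hs (hH1 ▸ mem_sup_right h)) 2 one_le_two (by omega) ?_
    rw [commutator_sup_self_eq_commutator_right,
      commutator_zpowers_sup_eq_lowerCentralSeries_two hmax hgen
        (hdef ▸ (⊤ : Subgroup G).lowerCentralSeries_antitone (by omega))]
  · refine hcard _ hχ (n - k - 1) (by omega) (by omega) ?_
    rw [← hdef, hH1, commutator_sup_self_eq_commutator_right]

/-- Orders of the abelianizations of the six maximal normal subgroups (Theorem 2.2, n ≥ 4). -/
theorem abelianization_orders_of_maximal_subgroups {G : Type*} [Group G] [Finite G]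
    [IsMulCommutative ((⊤ : Subgroup G).lowerCentralSeries 1)]
    (n : ℕ) (hn : 4 ≤ n)
    (hord : Nat.card G = 5 ^ n)
    (hmax : (⊤ : Subgroup G).lowerCentralSeries (n - 1) = ⊥)
    (hmax' : (⊤ : Subgroup G).lowerCentralSeries (n - 2) ≠ ⊥)
    (habel : Nonempty (Abelianization G ≃* Multiplicative (ZMod 5 × ZMod 5)))
    (k : ℕ)
    (hdef : ⁅(twoStepCentralizer G : Subgroup G), ((⊤ : Subgroup G).lowerCentralSeries 1 : Subgroup G)⁆ =
      (⊤ : Subgroup G).lowerCentralSeries (n - k - 1)) (hk : k ≤ n - 4)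
    (x y : G) (hx : x ∉ twoStepCentralizer G)
    (hy : y ∈ twoStepCentralizer G) (hy' : y ∉ (⊤ : Subgroup G).lowerCentralSeries 1)
    (hH1 : twoStepCentralizer G = Subgroup.closure {y} ⊔ (⊤ : Subgroup G).lowerCentralSeries 1) :
    (∀ i, 2 ≤ i → i ≤ 6 →
      Nat.card (Abelianization
        ↥(Subgroup.closure {x * y ^ (i - 2)} ⊔ (⊤ : Subgroup G).lowerCentralSeries 1)) = 5 ^ 2) ∧
    Nat.card (Abelianization ↥(twoStepCentralizer G)) = 5 ^ (n - k - 1) :=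
  abelianization_orders_of_maximal_subgroups_general n hn hord hmax hmax' habel k hdef hk x y hx hy
    hy' hH1
end

section
/- Let G be a 5-group of order 5^n with n ≥ 4 such that G/γ_2(G) is of type (5, 5). If G is of maximal class, then G admits a maximal normal subgroup H with |H / γ_2(H)| = 5^2. -/
/-!
Write `γ_j` for the lower central series. In a `p`-group of maximal class of order `p ^ n` with
`|G : γ_2| = p ^ 2`, every step `γ_j > γ_(j+1)` (`2 ≤ j < n`) has index exactly `p`, so
`|G : γ_j| = p ^ j`. Pick `s` outside the two-step centralizer `χ₂(G)`, i.e. `[s, u] ∉ γ_4` for some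
`u ∈ γ_2`. Since `[γ_2, γ_2] ≤ γ_4` (three subgroups lemma), `s ∉ γ_2`, and as `G/γ_2` has exponent
`p` the subgroup `H = ⟨s⟩γ_2` has index `p`. Now `[H, H] ≤ γ_3` and `[s, u] ∈ [H, H] \ γ_4`, so
`[H, H]γ_4 = γ_3`. In `G/[H, H]` the lower central series is then stationary from `γ_3` on, hence
trivial there, which gives `[H, H] = γ_3` and `|H : [H, H]| = |H : γ_2| |γ_2 : γ_3| = p ^ 2`.
-/

open Subgroup
open scoped commutatorElement

theorem Nat.pow_mul_le_of_mul_le_succ {f : ℕ → ℕ} {p a b : ℕ}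
    (h : ∀ k, a ≤ k → k < b → p * f k ≤ f (k + 1)) {j : ℕ} (hj : a + j ≤ b) :
    p ^ j * f a ≤ f (a + j) := by
  induction j with
  | zero => simp
  | succ j ih =>
    calc p ^ (j + 1) * f a = p * (p ^ j * f a) := by ring
      _ ≤ p * f (a + j) := Nat.mul_le_mul_left p (ih (by omega))
      _ ≤ f (a + j + 1) := h _ (by omega) (by omega)

namespace Subgroup

variable {G : Type*} [Group G]

theorem eq_or_eq_of_le_of_le_of_relIndex_prime {A M B : Subgroup G} (hAM : A ≤ M) (hMB : M ≤ B)
    (hp : (A.relIndex B).Prime) : M = A ∨ M = B := by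
  rw [← relIndex_mul_relIndex A M B hAM hMB] at hp
  rcases Nat.prime_mul_iff.mp hp with ⟨-, h⟩ | ⟨-, h⟩
  · exact Or.inr (le_antisymm hMB (relIndex_eq_one.mp h))
  · exact Or.inl (le_antisymm (relIndex_eq_one.mp h) hAM)

theorem isCoatom_of_index_prime {H : Subgroup G} (hp : H.index.Prime) : IsCoatom H := by
  refine ⟨fun h => hp.one_lt.ne' (index_eq_one.mpr h), fun K hK => ?_⟩
  rw [← relIndex_top_right] at hp
  exact (eq_or_eq_of_le_of_le_of_relIndex_prime hK.le le_top hp).resolve_left hK.ne'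

theorem card_abelianization_eq_relIndex (H : Subgroup G) :
    Nat.card (Abelianization H) = ⁅H, H⁆.relIndex H := by
  rw [relIndex, subgroupOf, ← H.map_subtype_commutator,
    comap_map_eq_self_of_injective H.subtype_injective]
  rfl

theorem index_zpowers_sup_mul_orderOf (N : Subgroup G) [N.Normal] (s : G) :
    (zpowers s ⊔ N).index * orderOf (s : G ⧸ N) = N.index := by
  have hmap : (zpowers s ⊔ N).map (QuotientGroup.mk' N) = zpowers (s : G ⧸ N) := by
    rw [map_sup, MonoidHom.map_zpowers, (map_eq_bot_iff _).mpr (QuotientGroup.ker_mk' N).ge,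
      sup_bot_eq]
    rfl
  rw [← index_map_eq _ (QuotientGroup.mk'_surjective N)
    ((QuotientGroup.ker_mk' N).le.trans le_sup_right), hmap, ← Nat.card_zpowers, mul_comm,
    card_mul_index]
  rfl

theorem commutator_closure_le {S : Set G} {N : Subgroup G} [N.Normal]
    (hS : ∀ x ∈ S, ∀ y ∈ S, ⁅x, y⁆ ∈ N) : ⁅closure S, closure S⁆ ≤ N := by
  have hcomm : IsMulCommutative (closure (QuotientGroup.mk' N '' S)) := by
    refine isMulCommutative_closure ?_
    rintro _ ⟨x, hx, rfl⟩ _ ⟨y, hy, rfl⟩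
    rw [← commutatorElement_eq_one_iff_mul_comm, ← map_commutatorElement]
    exact (QuotientGroup.eq_one_iff _).mpr (hS x hx y hy)
  rw [← QuotientGroup.ker_mk' N, ← map_eq_bot_iff, map_commutator, MonoidHom.map_closure]
  exact commutator_self_eq_bot_iff.mpr hcomm

end Subgroup

theorem IsPGroup.mul_index_le_index_of_lt {G : Type*} [Group G] [Finite G] {p : ℕ}
    [Fact p.Prime] (hG : IsPGroup p G) {A B : Subgroup G} (h : A < B) : p * B.index ≤ A.index := by
  rw [← relIndex_mul_index h.le]
  refine Nat.mul_le_mul_right _ ?_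
  obtain ⟨m, hm⟩ := (hG.to_subgroup B).index (A.subgroupOf B)
  have hm0 : m ≠ 0 := by
    rintro rfl
    exact h.not_ge (relIndex_eq_one.mp hm)
  change p ≤ A.relIndex B
  rw [relIndex, hm]
  exact Nat.le_self_pow hm0 p

section LowerCentralSeries

variable {G : Type*} [Group G]

-- `γ k` is the paper's `γ_(k+1)`: Mathlib starts the lower central series at index `0`.
local notation "γ" => Subgroup.lowerCentralSeries (⊤ : Subgroup G)

theorem Subgroup.lowerCentralSeries_eq_bot_of_le_succ {S : Subgroup G} {k c : ℕ}
    (h : S.lowerCentralSeries k ≤ S.lowerCentralSeries (k + 1)) (hc : S.lowerCentralSeries c = ⊥) :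
    S.lowerCentralSeries k = ⊥ := by
  have hstable : ∀ m, S.lowerCentralSeries k ≤ S.lowerCentralSeries (k + m) := by
    intro m
    induction m with
    | zero => rfl
    | succ m ih => exact h.trans (commutator_mono ih le_rfl)
  rw [eq_bot_iff, ← hc]
  exact (hstable c).trans (S.lowerCentralSeries_antitone (Nat.le_add_left c k))

theorem Subgroup.lowerCentralSeries_succ_lt_s2 {S : Subgroup G} {k c : ℕ}
    (hc : S.lowerCentralSeries c = ⊥) (hk : S.lowerCentralSeries k ≠ ⊥) :
    S.lowerCentralSeries (k + 1) < S.lowerCentralSeries k :=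
  (S.lowerCentralSeries_antitone k.le_succ).lt_of_ne
    fun h => hk (lowerCentralSeries_eq_bot_of_le_succ h.ge hc)

theorem Subgroup.map_top_lowerCentralSeries_of_surjective {Q : Type*} [Group Q] {f : G →* Q}
    (hf : Function.Surjective f) (k : ℕ) :
    (γ k).map f = (⊤ : Subgroup Q).lowerCentralSeries k := by
  rw [map_lowerCentralSeries, map_top_of_surjective f hf]

theorem Subgroup.lowerCentralSeries_le_of_le_sup_succ_s2 {N : Subgroup G} [N.Normal] {k c : ℕ}
    (h : γ k ≤ N ⊔ γ (k + 1)) (hc : γ c = ⊥) : γ k ≤ N := by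
  have hπ := QuotientGroup.mk'_surjective N
  have hQ : (⊤ : Subgroup (G ⧸ N)).lowerCentralSeries k = ⊥ := by
    refine lowerCentralSeries_eq_bot_of_le_succ (c := c) ?_ ?_
    · simp only [← map_top_lowerCentralSeries_of_surjective hπ]
      refine (map_mono h).trans ?_
      rw [map_sup, (map_eq_bot_iff _).mpr (QuotientGroup.ker_mk' N).ge, bot_sup_eq]
    · rw [← map_top_lowerCentralSeries_of_surjective hπ, hc, map_bot]
  rw [← map_top_lowerCentralSeries_of_surjective hπ, map_eq_bot_iff, QuotientGroup.ker_mk'] at hQ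
  exact hQ

theorem Subgroup.commutator_lowerCentralSeries_one_le : ⁅γ 1, γ 1⁆ ≤ γ 3 := by
  have hπ := QuotientGroup.mk'_surjective (γ 3)
  rw [← QuotientGroup.ker_mk' (γ 3), ← map_eq_bot_iff, map_commutator,
    map_top_lowerCentralSeries_of_surjective hπ]
  have h3 : (⊤ : Subgroup (G ⧸ γ 3)).lowerCentralSeries 3 = ⊥ := by
    rw [← map_top_lowerCentralSeries_of_surjective hπ, map_eq_bot_iff, QuotientGroup.ker_mk']
  refine commutator_commutator_eq_bot_of_rotate ?_ h3
  rw [commutator_comm ⊤ (lowerCentralSeries ⊤ 1)]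
  exact h3

theorem Subgroup.commutator_zpowers_sup_le (s : G) :
    ⁅zpowers s ⊔ γ 1, zpowers s ⊔ γ 1⁆ ≤ γ 2 := by
  rw [zpowers_eq_closure, ← closure_eq (γ 1), ← Subgroup.closure_union]
  refine commutator_closure_le ?_
  rintro x hx y hy
  rcases hx with rfl | hx
  · rcases hy with rfl | hy
    · rw [commutatorElement_self]
      exact one_mem _
    · rw [← commutatorElement_inv]
      exact inv_mem (commutator_mem_commutator hy (mem_top x))
  · exact commutator_mem_commutator hx (mem_top y)

theorem Subgroup.eq_lowerCentralSeries_of_le_of_not_le {N : Subgroup G} [N.Normal] {k c : ℕ}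
    (hle : N ≤ γ k) (hnle : ¬N ≤ γ (k + 1)) (hp : ((γ (k + 1)).relIndex (γ k)).Prime)
    (hc : γ c = ⊥) : N = γ k := by
  have hsup : N ⊔ γ (k + 1) = γ k := by
    refine (eq_or_eq_of_le_of_le_of_relIndex_prime le_sup_right
      (sup_le hle ((⊤ : Subgroup G).lowerCentralSeries_antitone k.le_succ)) hp).resolve_left ?_
    exact fun h => hnle (h ▸ le_sup_left)
  exact le_antisymm hle (lowerCentralSeries_le_of_le_sup_succ_s2 hsup.ge hc)

theorem lowerCentralSeries_one_le_twoStepCentralizer : γ 1 ≤ twoStepCentralizer G :=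
  fun _ hg _ hu => commutator_lowerCentralSeries_one_le (commutator_mem_commutator hg hu)

theorem twoStepCentralizer_eq_top_iff : twoStepCentralizer G = ⊤ ↔ γ 2 ≤ γ 3 := by
  refine ⟨fun h => ?_, fun h => eq_top_iff.mpr fun g _ u hu => ?_⟩
  · refine commutator_le.mpr fun u hu g _ => ?_
    rw [← commutatorElement_inv]
    exact inv_mem ((h ▸ mem_top g : g ∈ twoStepCentralizer G) u hu)
  · rw [← commutatorElement_inv]
    exact inv_mem (h (commutator_mem_commutator hu (mem_top g)))

theorem index_lowerCentralSeries_of_maximalClass {p n : ℕ} [Fact p.Prime] [Finite G]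
    (hG : Nat.card G = p ^ n) (hab : Nat.card (Abelianization G) = p ^ 2)
    (hmax : γ (n - 1) = ⊥) (hmax' : γ (n - 2) ≠ ⊥) {k : ℕ} (hk : 1 ≤ k) (hkn : k ≤ n - 1) :
    (γ k).index = p ^ (k + 1) := by
  have hstep : ∀ j, 1 ≤ j → j < n - 1 → p * (γ j).index ≤ (γ (j + 1)).index := by
    intro j _ hj
    refine (IsPGroup.of_card hG).mul_index_le_index_of_lt (lowerCentralSeries_succ_lt_s2 hmax ?_)
    exact ne_bot_of_le_ne_bot hmax' ((⊤ : Subgroup G).lowerCentralSeries_antitone (by omega))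
  have hlow := Nat.pow_mul_le_of_mul_le_succ hstep (j := k - 1) (by omega)
  have hup := Nat.pow_mul_le_of_mul_le_succ (fun j hj => hstep j (hk.trans hj))
    (j := n - 1 - k) (by omega)
  rw [show 1 + (k - 1) = k by omega] at hlow
  rw [show k + (n - 1 - k) = n - 1 by omega, hmax, index_bot, hG] at hup
  change p ^ (k - 1) * Nat.card (Abelianization G) ≤ _ at hlow
  have hp := (Fact.out : p.Prime).pos
  apply le_antisymm
  · refine Nat.le_of_mul_le_mul_left (hup.trans_eq ?_) (pow_pos hp (n - 1 - k))
    rw [← pow_add]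
    congr 1
    omega
  · rwa [hab, ← pow_add, show k - 1 + 2 = k + 1 by omega] at hlow

theorem relIndex_lowerCentralSeries_of_maximalClass {p n : ℕ} [Fact p.Prime] [Finite G]
    (hG : Nat.card G = p ^ n) (hab : Nat.card (Abelianization G) = p ^ 2)
    (hmax : γ (n - 1) = ⊥) (hmax' : γ (n - 2) ≠ ⊥) {k : ℕ} (hk : 1 ≤ k) (hkn : k + 1 ≤ n - 1) :
    (γ (k + 1)).relIndex (γ k) = p := by
  have := relIndex_mul_index ((⊤ : Subgroup G).lowerCentralSeries_antitone k.le_succ)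
  rw [index_lowerCentralSeries_of_maximalClass hG hab hmax hmax' hk (by omega),
    index_lowerCentralSeries_of_maximalClass hG hab hmax hmax' (by omega) hkn] at this
  exact Nat.eq_of_mul_eq_mul_right (pow_pos (Fact.out : p.Prime).pos _) (this.trans (pow_succ' _ _))

theorem exists_isCoatom_normal_card_abelianization_of_maximalClass {p n : ℕ} [Fact p.Prime]
    [Finite G] (hG : Nat.card G = p ^ n) (hn : 4 ≤ n) (hab : Nat.card (Abelianization G) = p ^ 2)
    (hexp : ∀ x : Abelianization G, x ^ p = 1) (hmax : γ (n - 1) = ⊥) (hmax' : γ (n - 2) ≠ ⊥) :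
    ∃ H : Subgroup G, IsCoatom H ∧ H.Normal ∧ Nat.card (Abelianization H) = p ^ 2 := by
  have hp := (Fact.out : p.Prime).pos
  have hindex := fun k => index_lowerCentralSeries_of_maximalClass hG hab hmax hmax' (k := k)
  have hγ2 : γ 2 ≠ ⊥ :=
    ne_bot_of_le_ne_bot hmax' ((⊤ : Subgroup G).lowerCentralSeries_antitone (by omega))
  obtain ⟨s, -, hs⟩ := SetLike.exists_of_lt (lt_top_iff_ne_top.mpr fun h =>
    hγ2 (lowerCentralSeries_eq_bot_of_le_succ (twoStepCentralizer_eq_top_iff.mp h) hmax))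
  obtain ⟨u, hu, hsu⟩ : ∃ u ∈ γ 1, ⁅s, u⁆ ∉ γ 3 := by
    simpa [twoStepCentralizer] using hs
  set H := zpowers s ⊔ γ 1
  have hHnormal : H.Normal := .of_commutator_le G le_sup_right
  have hHindex : H.index = p := by
    have hs1 : s ∉ γ 1 := fun h => hs (lowerCentralSeries_one_le_twoStepCentralizer h)
    have hord : orderOf (s : G ⧸ γ 1) = p :=
      orderOf_eq_prime (hexp _) (by rwa [Ne, QuotientGroup.eq_one_iff])
    have := index_zpowers_sup_mul_orderOf (γ 1) s
    rw [hord, hindex 1 le_rfl (by omega), pow_two] at this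
    exact Nat.eq_of_mul_eq_mul_right hp this
  have hcomm : ⁅H, H⁆ = γ 2 := by
    have hsu' : ⁅s, u⁆ ∈ ⁅H, H⁆ :=
      commutator_mem_commutator (mem_sup_left (mem_zpowers s)) (mem_sup_right hu)
    refine eq_lowerCentralSeries_of_le_of_not_le (commutator_zpowers_sup_le s)
      (fun h => hsu (h hsu')) ?_ hmax
    rw [relIndex_lowerCentralSeries_of_maximalClass hG hab hmax hmax' (by omega) (by omega)]
    exact Fact.out
  refine ⟨H, isCoatom_of_index_prime (hHindex ▸ Fact.out), hHnormal, ?_⟩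
  have := relIndex_mul_index (hcomm ▸ commutator_le_self H : γ 2 ≤ H)
  rw [hindex 2 (by omega) (by omega), hHindex] at this
  rw [card_abelianization_eq_relIndex, hcomm]
  exact Nat.eq_of_mul_eq_mul_right hp (this.trans (pow_succ p 2))

end LowerCentralSeries

/-- A 5-group of order `5^n` (n ≥ 4) with abelianization of type (5,5) which is of maximal
class admits a maximal normal subgroup whose abelianization has order `5^2` (Lemma 2.1). -/
theorem exists_maximal_normal_subgroup_of_maximal_class {G : Type*} [Group G] [Finite G] (n : ℕ) (hn : 4 ≤ n)
    (hord : Nat.card G = 5 ^ n)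
    (habel : Nonempty (Abelianization G ≃* Multiplicative (ZMod 5 × ZMod 5)))
    (hmax : (⊤ : Subgroup G).lowerCentralSeries (n - 1) = ⊥)
    (hmax' : (⊤ : Subgroup G).lowerCentralSeries (n - 2) ≠ ⊥) :
    ∃ H : Subgroup G, IsCoatom H ∧ H.Normal ∧ Nat.card (Abelianization ↥H) = 5 ^ 2 := by
  obtain ⟨e⟩ := habel
  have hexp : ∀ y : Multiplicative (ZMod 5 × ZMod 5), y ^ 5 = 1 := by decide
  have : Fact (Nat.Prime 5) := ⟨by norm_num⟩
  refine exists_isCoatom_normal_card_abelianization_of_maximalClass hord hn ?_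
    (fun x => e.injective (by rw [map_pow, map_one, hexp])) hmax hmax'
  rw [Nat.card_congr e.toEquiv, Nat.card_eq_fintype_card]
  rfl
end

section
/- Let G be a 5-group of order 5^n with n ≥ 4 such that G/γ_2(G) is of type (5, 5). If G is of maximal class, then G admits at least five distinct maximal normal subgroups H with |H / γ_2(H)| = 5^2. -/
/-!
A maximal subgroup `M` of `G` contains `γ₂(G)` and is the preimage of one of the `p + 1` lines of
`G / γ₂(G) ≅ 𝔽_p²`, so `M = ⟨g⟩γ₂(G)` and `[M, M] ≤ γ₃(G)`. In maximal class every factor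
`γ_i(G) / γ_{i+1}(G)` with `i ≥ 2` has order `p`, so `γ₃(G) ≠ γ₄(G)` and `χ₂(G)` is a proper
subgroup; two distinct maximal subgroups generate `G`, so at most one of them lies in `χ₂(G)`.
If `M ⊄ χ₂(G)`, some `[s, u]` with `s ∈ M`, `u ∈ γ₂(G)` lies outside `γ₄(G)`, hence
`[M, M] γ₄(G) = γ₃(G)` and, `G` being nilpotent, `[M, M] = γ₃(G)`. Then
`|M / [M, M]| = |G : γ₃(G)| / |G : M| = p³ / p = p²`.
-/

open Subgroup
open scoped commutatorElement

theorem Nat.Prime.mul_dvd_of_dvd_of_ne {p a b N : ℕ} (hp : p.Prime) (hb : b ∣ p ^ N)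
    (hab : a ∣ b) (hne : a ≠ b) : p * a ∣ b := by
  obtain ⟨j, -, rfl⟩ := (Nat.dvd_prime_pow hp).1 hb
  obtain ⟨i, hij, rfl⟩ := (Nat.dvd_prime_pow hp).1 hab
  have hlt : i < j := lt_of_le_of_ne hij (by rintro rfl; exact hne rfl)
  rw [← pow_succ']
  exact Nat.pow_dvd_pow p hlt

theorem Nat.eq_pow_add_of_mul_dvd_succ {p i m : ℕ} {a : ℕ → ℕ} (hp : 0 < p)
    (h0 : a 0 = p ^ i) (hm : a m = p ^ (m + i)) (hstep : ∀ j < m, p * a j ∣ a (j + 1))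
    {j : ℕ} (hj : j ≤ m) : a j = p ^ (j + i) := by
  have hchain : ∀ d k, k + d ≤ m → p ^ d * a k ∣ a (k + d) := by
    intro d k
    induction d with
    | zero => simp
    | succ d ih =>
      intro hkd
      rw [pow_succ', mul_assoc]
      exact (Nat.mul_dvd_mul_left p (ih (by omega))).trans (hstep (k + d) (by omega))
  refine Nat.dvd_antisymm ?_ ?_
  · have h := hchain (m - j) j (by omega)
    rw [Nat.add_sub_cancel' hj, hm, show m + i = (m - j) + (j + i) by omega, pow_add] at h
    exact Nat.dvd_of_mul_dvd_mul_left (by positivity) h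
  · simpa [h0, ← pow_add] using hchain j 0 (by omega)

theorem Finset.card_le_card_filter_not_le_add_one {α : Type*} [SemilatticeSup α] [OrderTop α]
    {s : Finset α} {b : α} [DecidablePred (· ≤ b)] (hs : ∀ a ∈ s, IsCoatom a) (hb : b ≠ ⊤) :
    s.card ≤ (s.filter fun a => ¬ a ≤ b).card + 1 := by
  have hle : (s.filter (· ≤ b)).card ≤ 1 := Finset.card_le_one.mpr fun a ha a' ha' => by
    rw [Finset.mem_filter] at ha ha'
    by_contra hne
    exact hb (top_le_iff.mp ((hs a ha.1).sup_eq_top_of_ne (hs a' ha'.1) hne ▸ sup_le ha.2 ha'.2))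
  have := Finset.card_filter_add_card_filter_not (s := s) (· ≤ b)
  omega

namespace Subgroup

variable {G : Type*} [Group G]

theorem eq_or_eq_of_relIndex_prime {A L B : Subgroup G} (hAL : A ≤ L) (hLB : L ≤ B)
    (hp : (A.relIndex B).Prime) : L = A ∨ L = B := by
  rw [← relIndex_mul_relIndex A L B hAL hLB] at hp
  rcases Nat.prime_mul_iff.mp hp with ⟨-, h⟩ | ⟨-, h⟩
  · exact Or.inr (le_antisymm hLB (relIndex_eq_one.mp h))
  · exact Or.inl (le_antisymm (relIndex_eq_one.mp h) hAL)

theorem lowerCentralSeries_eq_bot_of_succ_eq [Group.IsNilpotent G] {k : ℕ}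
    (h : (⊤ : Subgroup G).lowerCentralSeries (k + 1) = (⊤ : Subgroup G).lowerCentralSeries k) :
    (⊤ : Subgroup G).lowerCentralSeries k = ⊥ := by
  have hstable : ∀ m, (⊤ : Subgroup G).lowerCentralSeries (k + m) =
      (⊤ : Subgroup G).lowerCentralSeries k := by
    intro m
    induction m with
    | zero => rfl
    | succ m ih => rw [← add_assoc, lowerCentralSeries_succ, ih, ← lowerCentralSeries_succ, h]
  obtain ⟨m, hm⟩ := nilpotent_iff_lowerCentralSeries.mp ‹Group.IsNilpotent G›
  rw [← hstable m, eq_bot_iff, ← hm]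
  exact lowerCentralSeries_antitone _ (Nat.le_add_left m k)

theorem lowerCentralSeries_succ_lt_s4 {c k : ℕ}
    (hbot : (⊤ : Subgroup G).lowerCentralSeries (c + 1) = ⊥)
    (hne : (⊤ : Subgroup G).lowerCentralSeries c ≠ ⊥) (hk : k ≤ c) :
    (⊤ : Subgroup G).lowerCentralSeries (k + 1) < (⊤ : Subgroup G).lowerCentralSeries k := by
  have : Group.IsNilpotent G := nilpotent_iff_lowerCentralSeries.mpr ⟨c + 1, hbot⟩
  refine lt_of_le_of_ne (lowerCentralSeries_antitone _ k.le_succ) fun h => hne ?_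
  rw [eq_bot_iff, ← lowerCentralSeries_eq_bot_of_succ_eq h]
  exact lowerCentralSeries_antitone _ hk

theorem lowerCentralSeries_le_of_le_sup [Group.IsNilpotent G] {k : ℕ} {N : Subgroup G}
    [N.Normal] (h : (⊤ : Subgroup G).lowerCentralSeries k ≤
      N ⊔ (⊤ : Subgroup G).lowerCentralSeries (k + 1)) :
    (⊤ : Subgroup G).lowerCentralSeries k ≤ N := by
  set π := QuotientGroup.mk' N
  have hmap : ∀ j, ((⊤ : Subgroup G).lowerCentralSeries j).map π =
      (⊤ : Subgroup (G ⧸ N)).lowerCentralSeries j := fun j => by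
    rw [map_lowerCentralSeries, ← MonoidHom.range_eq_map, QuotientGroup.range_mk']
  have hQ : (⊤ : Subgroup (G ⧸ N)).lowerCentralSeries (k + 1) =
      (⊤ : Subgroup (G ⧸ N)).lowerCentralSeries k := by
    refine le_antisymm (lowerCentralSeries_antitone _ k.le_succ) ?_
    have := map_mono (f := π) h
    rwa [map_sup, QuotientGroup.map_mk'_self, bot_sup_eq, hmap, hmap] at this
  rw [← QuotientGroup.ker_mk' N, ← map_eq_bot_iff, hmap]
  exact lowerCentralSeries_eq_bot_of_succ_eq hQ

theorem mk_mem_center_of_mem_lowerCentralSeries {k : ℕ} {z : G}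
    (hz : z ∈ (⊤ : Subgroup G).lowerCentralSeries k) :
    (z : G ⧸ (⊤ : Subgroup G).lowerCentralSeries (k + 1)) ∈ center _ := by
  rw [mem_center_iff]
  intro q
  induction q using QuotientGroup.induction_on with
  | H x =>
    rw [← QuotientGroup.mk_mul, ← QuotientGroup.mk_mul, QuotientGroup.eq]
    have := commutator_mem_commutator (inv_mem hz) (mem_top x⁻¹)
    simpa [commutatorElement_def, mul_assoc] using this

theorem commutator_zpowers_sup_le_s4 (g : G) :
    ⁅zpowers g ⊔ (⊤ : Subgroup G).lowerCentralSeries 1,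
      zpowers g ⊔ (⊤ : Subgroup G).lowerCentralSeries 1⁆ ≤
      (⊤ : Subgroup G).lowerCentralSeries 2 := by
  rw [commutator_le]
  intro a ha b hb
  obtain ⟨_, ⟨i, rfl⟩, z, hz, rfl⟩ := mem_sup_of_normal_right.mp ha
  obtain ⟨_, ⟨j, rfl⟩, w, hw, rfl⟩ := mem_sup_of_normal_right.mp hb
  rw [← QuotientGroup.eq_one_iff, ← QuotientGroup.mk'_apply, map_commutatorElement,
    commutatorElement_eq_one_iff_commute, map_mul, map_mul, map_zpow, map_zpow]
  have hz' := mem_center_iff.mp (mk_mem_center_of_mem_lowerCentralSeries hz)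
  have hw' := mem_center_iff.mp (mk_mem_center_of_mem_lowerCentralSeries hw)
  exact ((Commute.zpow_zpow_self _ i j).mul_right (hw' _)).mul_left (hz' _).symm

end Subgroup

section TwoStepCentralizer

variable {G : Type*} [Group G]

theorem mem_twoStepCentralizer {g : G} : g ∈ twoStepCentralizer G ↔
    ∀ u ∈ (⊤ : Subgroup G).lowerCentralSeries 1, ⁅g, u⁆ ∈ (⊤ : Subgroup G).lowerCentralSeries 3 :=
  Iff.rfl

theorem twoStepCentralizer_ne_top
    (h : (⊤ : Subgroup G).lowerCentralSeries 3 < (⊤ : Subgroup G).lowerCentralSeries 2) :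
    twoStepCentralizer G ≠ ⊤ := by
  intro htop
  refine h.not_ge (commutator_le.mpr fun u hu g _ => ?_)
  rw [← commutatorElement_inv]
  exact inv_mem (mem_twoStepCentralizer.mp (htop ▸ mem_top g) u hu)

theorem commutator_eq_lowerCentralSeries_two [Group.IsNilpotent G] {H : Subgroup G}
    (hH : (⊤ : Subgroup G).lowerCentralSeries 1 ≤ H)
    (hHH : ⁅H, H⁆ ≤ (⊤ : Subgroup G).lowerCentralSeries 2)
    (hχ : ¬ H ≤ twoStepCentralizer G)
    (hp : Nat.Prime (((⊤ : Subgroup G).lowerCentralSeries 3).relIndex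
      ((⊤ : Subgroup G).lowerCentralSeries 2))) :
    ⁅H, H⁆ = (⊤ : Subgroup G).lowerCentralSeries 2 := by
  have : H.Normal := .of_commutator_le G hH
  obtain ⟨s, hs, hsχ⟩ := SetLike.not_le_iff_exists.mp hχ
  obtain ⟨u, hu, hsu⟩ : ∃ u ∈ (⊤ : Subgroup G).lowerCentralSeries 1,
      ⁅s, u⁆ ∉ (⊤ : Subgroup G).lowerCentralSeries 3 := by
    simpa [mem_twoStepCentralizer] using hsχ
  have hsup : ⁅H, H⁆ ⊔ (⊤ : Subgroup G).lowerCentralSeries 3 =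
      (⊤ : Subgroup G).lowerCentralSeries 2 := by
    have hle := sup_le hHH ((⊤ : Subgroup G).lowerCentralSeries_antitone (by norm_num : 2 ≤ 3))
    refine (eq_or_eq_of_relIndex_prime le_sup_right hle hp).resolve_left fun h => hsu ?_
    exact h ▸ mem_sup_left (commutator_mem_commutator hs (hH hu))
  exact le_antisymm hHH (lowerCentralSeries_le_of_le_sup hsup.ge)

end TwoStepCentralizer

section PlaneLines

variable (p : ℕ)

def lineGenerator : Option (ZMod p) → Multiplicative (ZMod p × ZMod p)
  | none => .ofAdd (0, 1)
  | some a => .ofAdd (1, a)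

variable {p} [Fact p.Prime]

theorem orderOf_lineGenerator (i : Option (ZMod p)) : orderOf (lineGenerator p i) = p := by
  refine orderOf_eq_prime ?_ ?_ <;> cases i <;> simp [lineGenerator, ← ofAdd_nsmul]

theorem zpowers_lineGenerator_injective :
    Function.Injective fun i => zpowers (lineGenerator p i) := by
  intro i j h
  obtain ⟨k, hk⟩ := mem_zpowers_iff.mp
    ((SetLike.ext_iff.mp h _).mpr (mem_zpowers (lineGenerator p j)))
  replace hk := congrArg Multiplicative.toAdd hk
  cases i <;> cases j <;>
    simp only [lineGenerator, toAdd_zpow, toAdd_ofAdd, Prod.smul_mk, smul_zero, zsmul_eq_mul,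
      mul_one, Prod.ext_iff, Option.some.injEq, reduceCtorEq, zero_ne_one, false_and]
      at hk ⊢ <;>
    simpa [hk.1] using hk.2

theorem index_zpowers_lineGenerator (i : Option (ZMod p)) :
    (zpowers (lineGenerator p i)).index = p := by
  have h := (zpowers (lineGenerator p i)).card_mul_index
  rw [Nat.card_zpowers, orderOf_lineGenerator, Nat.card_congr Multiplicative.toAdd,
    Nat.card_prod, Nat.card_zmod] at h
  exact Nat.eq_of_mul_eq_mul_left (Fact.out : p.Prime).pos h

end PlaneLines

section MaximalClass

variable {G : Type*} [Group G] [Finite G] {p c : ℕ} [hp : Fact p.Prime]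
  (hcard : Nat.card G = p ^ (c + 2))
  (h1 : ((⊤ : Subgroup G).lowerCentralSeries 1).index = p ^ 2)
  (hbot : (⊤ : Subgroup G).lowerCentralSeries (c + 1) = ⊥)
  (hne : (⊤ : Subgroup G).lowerCentralSeries c ≠ ⊥)
include hcard h1 hbot hne

theorem index_lowerCentralSeries_of_maximalClass_s4 {k : ℕ} (hk : k ≤ c) :
    ((⊤ : Subgroup G).lowerCentralSeries (k + 1)).index = p ^ (k + 2) := by
  refine Nat.eq_pow_add_of_mul_dvd_succ
    (a := fun j => ((⊤ : Subgroup G).lowerCentralSeries (j + 1)).index) hp.out.pos h1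
    (by simp only [hbot, index_bot, hcard]) (fun j hj => ?_) hk
  refine hp.out.mul_dvd_of_dvd_of_ne (hcard ▸ index_dvd_card _)
    (index_dvd_of_le (Subgroup.lowerCentralSeries_antitone _ (Nat.le_succ _)))
    (index_strictAnti (lowerCentralSeries_succ_lt_s4 hbot hne (by omega : j + 1 ≤ c))).ne

theorem card_abelianization_zpowers_sup_of_maximalClass (hc : 2 ≤ c) {g : G}
    (hH : (zpowers g ⊔ (⊤ : Subgroup G).lowerCentralSeries 1).index = p)
    (hχ : ¬ zpowers g ⊔ (⊤ : Subgroup G).lowerCentralSeries 1 ≤ twoStepCentralizer G) :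
    Nat.card (Abelianization ↥(zpowers g ⊔ (⊤ : Subgroup G).lowerCentralSeries 1)) = p ^ 2 := by
  set H := zpowers g ⊔ (⊤ : Subgroup G).lowerCentralSeries 1
  have : Group.IsNilpotent G := Subgroup.nilpotent_iff_lowerCentralSeries.mpr ⟨c + 1, hbot⟩
  have h2 : ((⊤ : Subgroup G).lowerCentralSeries 2).index = p ^ 3 :=
    index_lowerCentralSeries_of_maximalClass_s4 hcard h1 hbot hne (k := 1) (by omega)
  have h3 : ((⊤ : Subgroup G).lowerCentralSeries 3).index = p ^ 4 :=
    index_lowerCentralSeries_of_maximalClass_s4 hcard h1 hbot hne (k := 2) hc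
  have hrel : ((⊤ : Subgroup G).lowerCentralSeries 3).relIndex
      ((⊤ : Subgroup G).lowerCentralSeries 2) = p := by
    have := relIndex_mul_index ((⊤ : Subgroup G).lowerCentralSeries_antitone (by norm_num : 2 ≤ 3))
    rw [h2, h3, pow_succ' p 3] at this
    exact Nat.eq_of_mul_eq_mul_right (pow_pos hp.out.pos 3) this
  have hcomm : ⁅H, H⁆ = (⊤ : Subgroup G).lowerCentralSeries 2 :=
    commutator_eq_lowerCentralSeries_two le_sup_right (commutator_zpowers_sup_le_s4 g) hχ
      (hrel ▸ hp.out)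
  have := relIndex_mul_index (commutator_le_self H)
  rw [show ⁅H, H⁆.index = p ^ 3 from hcomm ▸ h2, hH, pow_succ] at this
  rw [card_abelianization_eq_relIndex]
  exact Nat.eq_of_mul_eq_mul_right hp.out.pos this

end MaximalClass

section AbelianizationOfTypePP

variable {G : Type*} [Group G] {p : ℕ}
  (e : Abelianization G ≃* Multiplicative (ZMod p × ZMod p))
include e

theorem index_lowerCentralSeries_one_of_mulEquiv :
    ((⊤ : Subgroup G).lowerCentralSeries 1).index = p ^ 2 := by
  rw [top_lowerCentralSeries_one, index_eq_card, sq]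
  exact (Nat.card_congr (e.toEquiv.trans Multiplicative.toAdd)).trans
    (by rw [Nat.card_prod, Nat.card_zmod])

theorem exists_injective_zpowers_sup_lowerCentralSeries_one [Fact p.Prime] :
    ∃ M : Option (ZMod p) → Subgroup G, Function.Injective M ∧
      ∀ i, (M i).index = p ∧ ∃ g, M i = zpowers g ⊔ (⊤ : Subgroup G).lowerCentralSeries 1 := by
  set φ : G →* Multiplicative (ZMod p × ZMod p) :=
    (e : Abelianization G →* _).comp Abelianization.of
  have hφ : Function.Surjective φ := e.surjective.comp (QuotientGroup.mk'_surjective _)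
  have hker : φ.ker = (⊤ : Subgroup G).lowerCentralSeries 1 :=
    (MonoidHom.ker_mulEquiv_comp _ e).trans (Abelianization.ker_of G)
  refine ⟨fun i => (zpowers (lineGenerator p i)).comap φ, fun i j h => ?_, fun i => ⟨?_, ?_⟩⟩
  · apply zpowers_lineGenerator_injective
    simpa only [map_comap_eq_self_of_surjective hφ] using congrArg (map φ) h
  · rw [index_comap_of_surjective _ hφ, index_zpowers_lineGenerator]
  · obtain ⟨g, hg⟩ := hφ (lineGenerator p i)
    exact ⟨g, by rw [← hker, ← comap_map_eq, MonoidHom.map_zpowers, hg]⟩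

end AbelianizationOfTypePP

/-- A 5-group of order `5^n` (n ≥ 4) with abelianization of type (5,5) which is of maximal
class admits at least five distinct maximal normal subgroups whose abelianizations have
order `5^2` (Lemma 2.1). -/
theorem five_maximal_normal_subgroups_of_maximal_class {G : Type*} [Group G] [Finite G] (n : ℕ) (hn : 4 ≤ n)
    (hord : Nat.card G = 5 ^ n)
    (habel : Nonempty (Abelianization G ≃* Multiplicative (ZMod 5 × ZMod 5)))
    (hmax : (⊤ : Subgroup G).lowerCentralSeries (n - 1) = ⊥)
    (hmax' : (⊤ : Subgroup G).lowerCentralSeries (n - 2) ≠ ⊥) :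
    ∃ S : Finset (Subgroup G), 5 ≤ S.card ∧
      ∀ H ∈ S, IsCoatom H ∧ H.Normal ∧ Nat.card (Abelianization ↥H) = 5 ^ 2 := by
  classical
  obtain ⟨c, rfl⟩ : ∃ c, n = c + 2 := ⟨n - 2, by omega⟩
  obtain ⟨e⟩ := habel
  have : Fact (Nat.Prime 5) := ⟨Nat.prime_five⟩
  obtain ⟨M, hM_inj, hM⟩ := exists_injective_zpowers_sup_lowerCentralSeries_one e
  have hM_coatom (i) : IsCoatom (M i) := isCoatom_of_index_prime ((hM i).1.symm ▸ Nat.prime_five)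
  have hχ : twoStepCentralizer G ≠ ⊤ :=
    twoStepCentralizer_ne_top (lowerCentralSeries_succ_lt_s4 hmax hmax' (k := 2) (by omega))
  refine ⟨(Finset.univ.image M).filter (¬ · ≤ twoStepCentralizer G), ?_, fun H hH => ?_⟩
  · have := Finset.card_le_card_filter_not_le_add_one (s := Finset.univ.image M)
      (by simpa using hM_coatom) hχ
    rw [Finset.card_image_of_injective _ hM_inj, Finset.card_univ, Fintype.card_option,
      ZMod.card] at this
    omega
  · obtain ⟨hH, hHχ⟩ := Finset.mem_filter.mp hH
    obtain ⟨i, -, rfl⟩ := Finset.mem_image.mp hH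
    obtain ⟨hindex, g, hg⟩ := hM i
    refine ⟨hM_coatom i, .of_commutator_le G (hg ▸ le_sup_right), ?_⟩
    rw [hg] at hindex hHχ ⊢
    exact card_abelianization_zpowers_sup_of_maximalClass hord
      (index_lowerCentralSeries_one_of_mulEquiv e) hmax hmax' (by omega) hindex hHχ
end
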